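/- Let (x_n)_{n∈ℕ} satisfy x_0 = 0, x_n > 0 for n ≥ 1, lim x_n = ∞, with exponential N(t) = Σ t^n/x_n!, and assume that all the moment integrals 𝓘(n) := ∫₀^∞ t^n / N(t) dt are finite. Set μ_n := 𝓘(n)/x_n! and define the renormalized factorials x̃_n! := (μ_n/μ_0) x_n!. Then for all n, m ∈ ℕ: (1/(μ_0 π)) ∫_ℂ z^n (conj z)^m / N(|z|²) dA(z) = δ_{n,m} · x̃_n!. Consequently the renormalized coherent states ṽ_z = Ñ(|z|²)^{−1/2} Σ_n (z^n/√(x̃_n!)) e_n resolve the identity on ℓ²(ℕ,ℂ) with respect to the measure ν(dz) = (Ñ(|z|²)/N(|z|²)) dA(z)/(μ_0 π), where Ñ(t) = Σ_n t^n/x̃_n!. -/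

import Mathlib

open MeasureTheory

/-- The generalized factorial `xₙ! = x 1 * x 2 * ⋯ * x n` (with `x₀! = 1`). -/
noncomputable def gfact (x : ℕ → ℝ) (n : ℕ) : ℝ := ∏ k ∈ Finset.range n, x (k + 1)

/-- The associated exponential `N(t) = Σ tⁿ/xₙ!`. -/
noncomputable def gexp (x : ℕ → ℝ) (t : ℝ) : ℝ := ∑' n : ℕ, t ^ n / gfact x n

/-- The moment integrals `𝓘(n) = ∫₀^∞ tⁿ / N(t) dt`. -/
noncomputable def momI (x : ℕ → ℝ) (n : ℕ) : ℝ := ∫ t in Set.Ioi (0 : ℝ), t ^ n / gexp x t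

/-- The ratios `μₙ = 𝓘(n)/xₙ!`. -/
noncomputable def mu (x : ℕ → ℝ) (n : ℕ) : ℝ := momI x n / gfact x n

/-- The renormalized factorials `x̃ₙ! = (μₙ/μ₀) xₙ!`. -/
noncomputable def tfact (x : ℕ → ℝ) (n : ℕ) : ℝ := (mu x n / mu x 0) * gfact x n

/-- The renormalized exponential `Ñ(t) = Σ tⁿ/x̃ₙ!`. -/
noncomputable def texp (x : ℕ → ℝ) (t : ℝ) : ℝ := ∑' n : ℕ, t ^ n / tfact x n

/-- The renormalized coherent state coefficients
`(e_n , ṽ_z) = Ñ(|z|²)^{-1/2} zⁿ/√(x̃ₙ!)`. -/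
noncomputable def tcoh (x : ℕ → ℝ) (z : ℂ) (n : ℕ) : ℂ :=
  (Real.sqrt (texp x (‖z‖ ^ 2)))⁻¹ * z ^ n / Real.sqrt (tfact x n)

/-!
In polar coordinates `z = r e^{iθ}` the integrand `zⁿ z̄ᵐ / N(|z|²)` separates into
`r^{n+m+1} / N(r²)` times `e^{i(n-m)θ}`. The angular integral vanishes unless `n = m`, and on
the diagonal the substitution `t = r²` turns the radial integral into `𝓘(n) / 2`, so the integral
equals `π 𝓘(n) = π μ₀ x̃ₙ!`. In the coherent-state matrix element the factor `Ñ(|z|²)` cancels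
against the normalisation `Ñ(|z|²)^{-1/2}` of both states, which needs `Ñ > 0`, i.e. convergence
of `Ñ`. That comes from the lower bound `𝓘(n) ≥ Bⁿ⁺¹ / ((n + 1) N(B))`, valid because `N` is
increasing on `[0, ∞)`: with `B = 2t` it gives `tⁿ / x̃ₙ! = O((n + 1) / 2ⁿ)`.
-/

open MeasureTheory Set Filter Real

lemma integral_Ioo_exp_intCast_mul_mul_I (k : ℤ) :
    ∫ θ in Ioo (-π) π, Complex.exp (k * θ * Complex.I) =
      if k = 0 then ((2 * π : ℝ) : ℂ) else 0 := by
  split_ifs with hk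
  · simp [hk, two_mul, pi_pos.le]
  have hc : (k : ℂ) * Complex.I ≠ 0 := mul_ne_zero (by exact_mod_cast hk) Complex.I_ne_zero
  rw [← integral_Ioc_eq_integral_Ioo, ← intervalIntegral.integral_of_le (by linarith [pi_pos])]
  simp_rw [mul_right_comm _ _ Complex.I]
  rw [integral_exp_mul_complex hc, div_eq_zero_iff, sub_eq_zero,
    Complex.exp_eq_exp_iff_exists_int]
  exact Or.inl ⟨k, by push_cast; ring⟩

lemma integral_Ioi_pow_smul_comp_sq {E : Type*} [NormedAddCommGroup E] [NormedSpace ℝ E]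
    (g : ℝ → E) (n : ℕ) :
    ∫ r in Ioi 0, r ^ (2 * n + 1) • g (r ^ 2) = (2 : ℝ)⁻¹ • ∫ t in Ioi 0, t ^ n • g t := by
  rw [← integral_comp_rpow_Ioi (fun t => t ^ n • g t) two_ne_zero, ← integral_smul]
  refine setIntegral_congr_fun measurableSet_Ioi fun r _ => ?_
  simp only [smul_smul]
  norm_num
  congr 1
  ring

lemma integral_pow_mul_conj_pow_mul_comp_normSq (g : ℝ → ℂ) (n m : ℕ) :
    ∫ z : ℂ, z ^ n * (starRingEnd ℂ) z ^ m * g (‖z‖ ^ 2) =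
      if n = m then π * ∫ t in Ioi (0 : ℝ), (t : ℂ) ^ n * g t else 0 := by
  have hpolar : ∫ z : ℂ, z ^ n * (starRingEnd ℂ) z ^ m * g (‖z‖ ^ 2) =
      (∫ r in Ioi (0 : ℝ), r ^ (n + m + 1) • g (r ^ 2)) *
        ∫ θ in Ioo (-π) π, Complex.exp (((n : ℤ) - m : ℤ) * θ * Complex.I) := by
    rw [← Complex.integral_comp_polarCoord_symm, polarCoord_target,
      Measure.volume_eq_prod, ← setIntegral_prod_mul]
    refine setIntegral_congr_fun (measurableSet_Ioi.prod measurableSet_Ioo) ?_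
    rintro ⟨r, θ⟩ ⟨hr, -⟩
    have hr : 0 < r := hr
    have hsymm : Complex.polarCoord.symm (r, θ) = r * Complex.exp (θ * Complex.I) := by
      simp [Complex.exp_mul_I, ← Complex.ofReal_cos, ← Complex.ofReal_sin]
    dsimp only
    rw [hsymm, norm_mul, Complex.norm_real, Complex.norm_exp_ofReal_mul_I,
      Real.norm_of_nonneg hr.le, mul_one, map_mul, Complex.conj_ofReal, ← Complex.exp_conj]
    simp only [map_mul, Complex.conj_ofReal, Complex.conj_I, Complex.real_smul, mul_pow,
      ← Complex.exp_nat_mul]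
    have hphase : Complex.exp (n * (θ * Complex.I)) * Complex.exp (m * (θ * -Complex.I)) =
        Complex.exp (((n : ℤ) - m : ℤ) * θ * Complex.I) := by
      rw [← Complex.exp_add]
      push_cast
      ring_nf
    rw [← hphase]
    push_cast
    ring
  rw [hpolar, integral_Ioo_exp_intCast_mul_mul_I]
  simp only [sub_eq_zero, Nat.cast_inj]
  split_ifs with hnm
  · subst hnm
    rw [← two_mul, integral_Ioi_pow_smul_comp_sq]
    simp_rw [Complex.real_smul, Complex.ofReal_pow]
    push_cast
    field_simp
  · exact mul_zero _

section GeneralizedExponential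

variable {x : ℕ → ℝ}

lemma gfact_zero : gfact x 0 = 1 := Finset.prod_range_zero _

lemma gfact_succ (n : ℕ) : gfact x (n + 1) = gfact x n * x (n + 1) := Finset.prod_range_succ _ _

lemma gfact_pos (hpos : ∀ n, 1 ≤ n → 0 < x n) (n : ℕ) : 0 < gfact x n :=
  Finset.prod_pos fun k _ => hpos _ (Nat.le_add_left 1 k)

lemma summable_pow_div_gfact (hpos : ∀ n, 1 ≤ n → 0 < x n) (hlim : Tendsto x atTop atTop)
    (t : ℝ) : Summable fun n => t ^ n / gfact x n := by
  refine summable_of_ratio_norm_eventually_le (r := 1 / 2) (by norm_num) ?_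
  filter_upwards [(tendsto_add_atTop_iff_nat 1).2 hlim |>.eventually_ge_atTop (2 * |t|)]
    with n hn
  have hx : 0 < x (n + 1) := hpos _ (Nat.le_add_left 1 n)
  have hratio : |t| / x (n + 1) ≤ 1 / 2 := by
    rw [div_le_iff₀ hx]
    linarith
  calc ‖t ^ (n + 1) / gfact x (n + 1)‖ = |t| / x (n + 1) * ‖t ^ n / gfact x n‖ := by
        rw [gfact_succ, pow_succ, norm_div, norm_div, norm_mul, norm_mul,
          Real.norm_of_nonneg hx.le]
        simp only [Real.norm_eq_abs]
        field_simp
    _ ≤ 1 / 2 * ‖t ^ n / gfact x n‖ := by gcongr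

lemma one_le_gexp (hpos : ∀ n, 1 ≤ n → 0 < x n) (hlim : Tendsto x atTop atTop)
    {t : ℝ} (ht : 0 ≤ t) : 1 ≤ gexp x t := by
  simpa [gexp, gfact_zero] using (summable_pow_div_gfact hpos hlim t).le_tsum 0
    fun n _ => div_nonneg (pow_nonneg ht n) (gfact_pos hpos n).le

lemma gexp_pos (hpos : ∀ n, 1 ≤ n → 0 < x n) (hlim : Tendsto x atTop atTop)
    {t : ℝ} (ht : 0 ≤ t) : 0 < gexp x t :=
  one_pos.trans_le (one_le_gexp hpos hlim ht)

lemma gexp_le_gexp_of_le (hpos : ∀ n, 1 ≤ n → 0 < x n) (hlim : Tendsto x atTop atTop)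
    {s t : ℝ} (hs : 0 ≤ s) (hst : s ≤ t) : gexp x s ≤ gexp x t :=
  (summable_pow_div_gfact hpos hlim s).tsum_le_tsum
    (fun n => div_le_div_of_nonneg_right (pow_le_pow_left₀ hs hst n) (gfact_pos hpos n).le)
    (summable_pow_div_gfact hpos hlim t)

end GeneralizedExponential

section Moments

variable {x : ℕ → ℝ}

lemma pow_succ_div_le_momI (hpos : ∀ n, 1 ≤ n → 0 < x n) (hlim : Tendsto x atTop atTop)
    (hint : ∀ n : ℕ, IntegrableOn (fun t => t ^ n / gexp x t) (Ioi 0)) (n : ℕ)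
    {B : ℝ} (hB : 0 ≤ B) : B ^ (n + 1) / ((n + 1) * gexp x B) ≤ momI x n := by
  have hnonneg : ∀ t ∈ Ioi (0 : ℝ), 0 ≤ t ^ n / gexp x t := fun t ht =>
    div_nonneg (pow_nonneg (le_of_lt ht) n) (gexp_pos hpos hlim (le_of_lt ht)).le
  calc B ^ (n + 1) / ((n + 1) * gexp x B) = ∫ t in Ioc 0 B, t ^ n / gexp x B := by
        rw [integral_div, ← intervalIntegral.integral_of_le hB, integral_pow, div_div]
        norm_num
    _ ≤ ∫ t in Ioc 0 B, t ^ n / gexp x t := by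
        refine setIntegral_mono_on ((continuous_pow n).div_const _).integrableOn_Ioc
          ((hint n).mono_set Ioc_subset_Ioi_self) measurableSet_Ioc fun t ht => ?_
        exact div_le_div_of_nonneg_left (pow_nonneg ht.1.le n) (gexp_pos hpos hlim ht.1.le)
          (gexp_le_gexp_of_le hpos hlim ht.1.le ht.2)
    _ ≤ momI x n :=
        setIntegral_mono_set (hint n) ((ae_restrict_iff' measurableSet_Ioi).2 (.of_forall hnonneg))
          Ioc_subset_Ioi_self.eventuallyLE

lemma momI_pos (hpos : ∀ n, 1 ≤ n → 0 < x n) (hlim : Tendsto x atTop atTop)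
    (hint : ∀ n : ℕ, IntegrableOn (fun t => t ^ n / gexp x t) (Ioi 0)) (n : ℕ) :
    0 < momI x n := by
  refine lt_of_lt_of_le ?_ (pow_succ_div_le_momI hpos hlim hint n zero_le_one)
  have := gexp_pos hpos hlim zero_le_one
  positivity

lemma tfact_eq_momI_div (hpos : ∀ n, 1 ≤ n → 0 < x n) (n : ℕ) :
    tfact x n = momI x n / momI x 0 := by
  have := (gfact_pos hpos n).ne'
  rw [tfact, mu, mu, gfact_zero, div_one]
  field_simp

lemma tfact_pos (hpos : ∀ n, 1 ≤ n → 0 < x n) (hlim : Tendsto x atTop atTop)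
    (hint : ∀ n : ℕ, IntegrableOn (fun t => t ^ n / gexp x t) (Ioi 0)) (n : ℕ) :
    0 < tfact x n := by
  rw [tfact_eq_momI_div hpos]
  exact div_pos (momI_pos hpos hlim hint n) (momI_pos hpos hlim hint 0)

lemma summable_pow_div_tfact (hpos : ∀ n, 1 ≤ n → 0 < x n) (hlim : Tendsto x atTop atTop)
    (hint : ∀ n : ℕ, IntegrableOn (fun t => t ^ n / gexp x t) (Ioi 0)) {t : ℝ} (ht : 0 < t) :
    Summable fun n => t ^ n / tfact x n := by
  set C := momI x 0 * gexp x (2 * t) / (2 * t)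
  have hgeom : Summable fun n : ℕ => ((n : ℝ) + 1) * (1 / 2) ^ n := by
    simpa [add_mul] using (summable_pow_mul_geometric_of_norm_lt_one (R := ℝ) 1
      (r := 1 / 2) (by norm_num)).add summable_geometric_two
  refine Summable.of_nonneg_of_le (fun n => (div_pos (pow_pos ht n)
    (tfact_pos hpos hlim hint n)).le) (fun n => ?_) (hgeom.mul_left C)
  have hN := gexp_pos hpos hlim (by positivity : 0 ≤ 2 * t)
  have hm0 := momI_pos hpos hlim hint 0
  calc t ^ n / tfact x n = t ^ n * momI x 0 / momI x n := by
        rw [tfact_eq_momI_div hpos, div_div_eq_mul_div]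
    _ ≤ t ^ n * momI x 0 / ((2 * t) ^ (n + 1) / ((n + 1) * gexp x (2 * t))) := by
        gcongr
        exact pow_succ_div_le_momI hpos hlim hint n (by positivity)
    _ = C * (((n : ℝ) + 1) * (1 / 2) ^ n) := by
        simp only [C, mul_pow, pow_succ, one_div, inv_pow]
        field_simp

lemma tfact_zero (hpos : ∀ n, 1 ≤ n → 0 < x n) (hlim : Tendsto x atTop atTop)
    (hint : ∀ n : ℕ, IntegrableOn (fun t => t ^ n / gexp x t) (Ioi 0)) : tfact x 0 = 1 := by
  rw [tfact_eq_momI_div hpos, div_self (momI_pos hpos hlim hint 0).ne']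

lemma one_le_texp (hpos : ∀ n, 1 ≤ n → 0 < x n) (hlim : Tendsto x atTop atTop)
    (hint : ∀ n : ℕ, IntegrableOn (fun t => t ^ n / gexp x t) (Ioi 0)) {t : ℝ} (ht : 0 ≤ t) :
    1 ≤ texp x t := by
  have hsum : Summable fun n => t ^ n / tfact x n := by
    rcases ht.eq_or_lt with rfl | ht
    · exact summable_of_ne_finset_zero (s := {0}) fun n hn => by simp_all
    · exact summable_pow_div_tfact hpos hlim hint ht
  simpa [texp, tfact_zero hpos hlim hint] using hsum.le_tsum 0
    fun n _ => div_nonneg (pow_nonneg ht n) (tfact_pos hpos hlim hint n).le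

end Moments

lemma integral_pow_mul_conj_pow_div_gexp (x : ℕ → ℝ) (n m : ℕ) :
    ∫ z : ℂ, z ^ n * (starRingEnd ℂ) z ^ m / (gexp x (‖z‖ ^ 2) : ℂ) =
      if n = m then ((π * momI x n : ℝ) : ℂ) else 0 := by
  simp_rw [div_eq_mul_inv]
  rw [integral_pow_mul_conj_pow_mul_comp_normSq (fun t => ((gexp x t : ℂ))⁻¹)]
  have hmom : ∫ t in Ioi (0 : ℝ), (t : ℂ) ^ n * (gexp x t : ℂ)⁻¹ = momI x n := by
    rw [momI, integral_complex_ofReal.symm]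
    push_cast
    simp_rw [div_eq_mul_inv]
  rw [hmom, Complex.ofReal_mul]

lemma ofReal_texp_div_gexp_mul_tcoh_mul_conj_tcoh (x : ℕ → ℝ) {z : ℂ}
    (hz : 0 < texp x (‖z‖ ^ 2)) (n m : ℕ) :
    ((texp x (‖z‖ ^ 2) / gexp x (‖z‖ ^ 2) : ℝ) : ℂ) *
        (tcoh x z n * (starRingEnd ℂ) (tcoh x z m)) =
      (((√(tfact x n) * √(tfact x m))⁻¹ : ℝ) : ℂ) *
        (z ^ n * (starRingEnd ℂ) z ^ m / (gexp x (‖z‖ ^ 2) : ℂ)) := by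
  have hsq : (√(texp x (‖z‖ ^ 2)) : ℂ) ^ 2 = texp x (‖z‖ ^ 2) := by
    exact_mod_cast Real.sq_sqrt hz.le
  have hs : (√(texp x (‖z‖ ^ 2)) : ℂ) ≠ 0 := by exact_mod_cast (Real.sqrt_pos.2 hz).ne'
  simp only [tcoh, map_div₀, map_mul, map_pow, Complex.conj_ofReal]
  push_cast
  rw [← hsq]
  field_simp

theorem stmt_4_general (x : ℕ → ℝ) (hpos : ∀ n, 1 ≤ n → 0 < x n)
    (hlim : Filter.Tendsto x Filter.atTop Filter.atTop)
    (hint : ∀ n : ℕ, IntegrableOn (fun t => t ^ n / gexp x t) (Set.Ioi 0)) :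
    (∀ n m : ℕ,
      (1 / ((mu x 0 * Real.pi : ℝ) : ℂ)) *
          ∫ z : ℂ, z ^ n * (starRingEnd ℂ) z ^ m / (gexp x (‖z‖ ^ 2) : ℂ) =
        if n = m then (tfact x n : ℂ) else 0) ∧
    (∀ n m : ℕ,
      (1 / ((mu x 0 * Real.pi : ℝ) : ℂ)) *
          ∫ z : ℂ, ((texp x (‖z‖ ^ 2) / gexp x (‖z‖ ^ 2) : ℝ) : ℂ) *
            (tcoh x z n * (starRingEnd ℂ) (tcoh x z m)) =
        if n = m then 1 else 0) := by
  have horth : ∀ n m : ℕ, (1 / ((mu x 0 * π : ℝ) : ℂ)) *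
      ∫ z : ℂ, z ^ n * (starRingEnd ℂ) z ^ m / (gexp x (‖z‖ ^ 2) : ℂ) =
        if n = m then (tfact x n : ℂ) else 0 := by
    intro n m
    rw [integral_pow_mul_conj_pow_div_gexp]
    split_ifs
    · rw [tfact_eq_momI_div hpos, mu, gfact_zero, div_one]
      push_cast
      field_simp
    · exact mul_zero _
  refine ⟨horth, fun n m => ?_⟩
  have htexp (z : ℂ) : 0 < texp x (‖z‖ ^ 2) :=
    one_pos.trans_le (one_le_texp hpos hlim hint (sq_nonneg _))
  simp_rw [ofReal_texp_div_gexp_mul_tcoh_mul_conj_tcoh x (htexp _), integral_const_mul,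
    mul_left_comm _ (((_ : ℝ)⁻¹ : ℝ) : ℂ), horth n m]
  split_ifs with h
  · subst h
    rw [← Complex.ofReal_mul, Real.mul_self_sqrt (tfact_pos hpos hlim hint n).le]
    exact_mod_cast inv_mul_cancel₀ (tfact_pos hpos hlim hint n).ne'
  · exact mul_zero _

/-- With finite moments `𝓘(n) = ∫₀^∞ tⁿ/N(t) dt`, `μₙ = 𝓘(n)/xₙ!`
and `x̃ₙ! = (μₙ/μ₀) xₙ!`, for all `n m`:
`(1/(μ₀π)) ∫_ℂ zⁿ (conj z)ᵐ / N(|z|²) dA(z) = δ_{n,m} x̃ₙ!`, and consequently the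
renormalized coherent states resolve the identity with respect to
`ν(dz) = (Ñ(|z|²)/N(|z|²)) dA(z)/(μ₀π)`, in matrix-element form. -/
theorem stmt_4 (x : ℕ → ℝ) (hx0 : x 0 = 0) (hpos : ∀ n, 1 ≤ n → 0 < x n)
    (hlim : Filter.Tendsto x Filter.atTop Filter.atTop)
    (hint : ∀ n : ℕ, IntegrableOn (fun t => t ^ n / gexp x t) (Set.Ioi 0)) :
    (∀ n m : ℕ,
      (1 / ((mu x 0 * Real.pi : ℝ) : ℂ)) *
          ∫ z : ℂ, z ^ n * (starRingEnd ℂ) z ^ m / (gexp x (‖z‖ ^ 2) : ℂ) =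
        if n = m then (tfact x n : ℂ) else 0) ∧
    (∀ n m : ℕ,
      (1 / ((mu x 0 * Real.pi : ℝ) : ℂ)) *
          ∫ z : ℂ, ((texp x (‖z‖ ^ 2) / gexp x (‖z‖ ^ 2) : ℝ) : ℂ) *
            (tcoh x z n * (starRingEnd ℂ) (tcoh x z m)) =
        if n = m then 1 else 0) :=
  stmt_4_general x hpos hlim hint
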